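/- The sequence (i_n)_{n ≥ 0} contains no 5th powers: there do not exist a natural number p and a positive integer ℓ such that i_{p+j+ℓ} = i_{p+j} for all 0 ≤ j < 4ℓ. -/

import Mathlib

/-!
Appending a bit `1` to a binary expansion creates no new inversion, while appending a `0`
creates one for each `1` already present. Hence `i (2n+1) = i n`, and `i (4k+2) = -i (4k+1)`,
since the expansions of `4k+1` and `4k+2` differ only by a final `01` becoming `10`.

A fifth power of even period `2m` read at odd positions gives a fifth power of period `m`, so
it suffices to exclude odd periods `ℓ`. Then `n, n+ℓ, n+2ℓ, n+3ℓ` meet every residue mod 4, so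
every pair `(i n, i (n+1))` in the first period is copied to some pair at `(4k+1, 4k+2)`, which
forces `i (n+1) = -i n`. Thus `i (p+ℓ) = (-1)^ℓ i p = -i p`, contradicting periodicity.
-/

/-- `inv2 n` is the number of inversions in the binary representation of `n`,
i.e. the number of pairs of bit positions `a > b` such that bit `a` of `n` is `1`
and bit `b` of `n` is `0`. -/
def inv2 (n : ℕ) : ℕ :=
  ((Finset.range (n + 1) ×ˢ Finset.range (n + 1)).filter
    (fun p => p.2 < p.1 ∧ n.testBit p.1 = true ∧ n.testBit p.2 = false)).card

/-- `iSeq n = (-1)^(inv2 n)`. -/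
def iSeq (n : ℕ) : ℤ := (-1) ^ inv2 n

open Finset

namespace Nat

theorem testBit_two_mul_add_one_zero (n : ℕ) : (2 * n + 1).testBit 0 = true := by
  simp [testBit_zero]

theorem testBit_two_mul_zero (n : ℕ) : (2 * n).testBit 0 = false := by
  simp [testBit_zero]

theorem testBit_two_mul_add_one_succ (n i : ℕ) :
    (2 * n + 1).testBit (i + 1) = n.testBit i := by
  rw [testBit_succ]; congr 1; omega

theorem testBit_two_mul_succ (n i : ℕ) : (2 * n).testBit (i + 1) = n.testBit i := by
  rw [testBit_succ]; congr 1; omega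

end Nat

def bitCount (N n : ℕ) : ℕ := ∑ a ∈ range N, if n.testBit a = true then 1 else 0

def inversionCount (N n : ℕ) : ℕ :=
  ∑ a ∈ range N, ∑ b ∈ range a, if n.testBit a = true ∧ n.testBit b = false then 1 else 0

theorem inversionCount_eq_of_lt {n N M : ℕ} (hN : n < N) (hM : n < M) :
    inversionCount N n = inversionCount M n := by
  have hzero : ∀ a ≥ n + 1, (∑ b ∈ range a,
      if n.testBit a = true ∧ n.testBit b = false then 1 else 0) = 0 := fun a ha => by
    have : n.testBit a = false := Nat.testBit_lt_two_pow <|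
      calc n < a := ha
        _ < 2 ^ a := Nat.lt_two_pow_self
    simp [this]
  rw [inversionCount, inversionCount, eventually_constant_sum hzero hN,
    eventually_constant_sum hzero hM]

theorem inv2_eq_inversionCount {n N : ℕ} (hN : n < N) : inv2 n = inversionCount N n := by
  rw [← inversionCount_eq_of_lt (Nat.lt_succ_self n) hN, inv2, card_filter, sum_product]
  refine sum_congr rfl fun a ha => ?_
  simp_rw [ite_and]
  rw [← sum_filter, range_eq_Ico, Ico_filter_lt, ← range_eq_Ico,
    min_eq_right (mem_range.1 ha).le]

theorem bitCount_succ_two_mul_add_one (N n : ℕ) :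
    bitCount (N + 1) (2 * n + 1) = bitCount N n + 1 := by
  simp only [bitCount, sum_range_succ', Nat.testBit_two_mul_add_one_succ,
    Nat.testBit_two_mul_add_one_zero, if_true]

theorem inversionCount_succ_two_mul_add_one (N n : ℕ) :
    inversionCount (N + 1) (2 * n + 1) = inversionCount N n := by
  simp only [inversionCount, sum_range_succ', Nat.testBit_two_mul_add_one_succ,
    Nat.testBit_two_mul_add_one_zero, Bool.true_eq_false, and_false, if_false, add_zero,
    sum_range_zero]

theorem inversionCount_succ_two_mul (N n : ℕ) :
    inversionCount (N + 1) (2 * n) = inversionCount N n + bitCount N n := by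
  simp only [inversionCount, bitCount, sum_range_succ', Nat.testBit_two_mul_succ,
    Nat.testBit_two_mul_zero, and_true, sum_range_zero, add_zero, sum_add_distrib]

theorem inv2_two_mul_add_one (n : ℕ) : inv2 (2 * n + 1) = inv2 n := by
  rw [inv2_eq_inversionCount (N := 2 * n + 1 + 1) (by omega),
    inversionCount_succ_two_mul_add_one, ← inv2_eq_inversionCount (by omega)]

theorem inv2_four_mul_add_two (k : ℕ) : inv2 (4 * k + 2) = inv2 (4 * k + 1) + 1 := by
  rw [show 4 * k + 2 = 2 * (2 * k + 1) by ring, show 4 * k + 1 = 2 * (2 * k) + 1 by ring,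
    inv2_eq_inversionCount (N := 4 * k + 1 + 1 + 1) (by omega),
    inv2_eq_inversionCount (N := 4 * k + 1 + 1 + 1) (by omega),
    inversionCount_succ_two_mul, inversionCount_succ_two_mul_add_one,
    inversionCount_succ_two_mul_add_one, inversionCount_succ_two_mul,
    bitCount_succ_two_mul_add_one, add_assoc]

theorem iSeq_two_mul_add_one (n : ℕ) : iSeq (2 * n + 1) = iSeq n := by
  rw [iSeq, iSeq, inv2_two_mul_add_one]

theorem iSeq_four_mul_add_two (k : ℕ) : iSeq (4 * k + 2) = -iSeq (4 * k + 1) := by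
  rw [iSeq, iSeq, inv2_four_mul_add_two, pow_succ, mul_neg_one]

theorem iSeq_ne_zero (n : ℕ) : iSeq n ≠ 0 :=
  pow_ne_zero _ (by norm_num)

def IsFifthPowerAt {α : Type*} (f : ℕ → α) (p ℓ : ℕ) : Prop :=
  ∀ j < 4 * ℓ, f (p + j + ℓ) = f (p + j)

theorem exists_lt_four_add_mul_mod_four_eq_one {ℓ : ℕ} (hℓ : Odd ℓ) (n : ℕ) :
    ∃ j < 4, (n + j * ℓ) % 4 = 1 := by
  obtain ⟨m, rfl⟩ := hℓ
  rcases (by omega : n % 4 = 1 ∨ (n + 1 * (2 * m + 1)) % 4 = 1 ∨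
      (n + 2 * (2 * m + 1)) % 4 = 1 ∨ (n + 3 * (2 * m + 1)) % 4 = 1) with h | h | h | h
  exacts [⟨0, by norm_num, by simpa using h⟩, ⟨1, by norm_num, h⟩, ⟨2, by norm_num, h⟩,
    ⟨3, by norm_num, h⟩]

namespace IsFifthPowerAt

variable {α : Type*} {f : ℕ → α} {p ℓ : ℕ}

theorem apply_add_mul (h : IsFifthPowerAt f p ℓ) {n : ℕ} (hn : p ≤ n) :
    ∀ j, n + j * ℓ < p + 5 * ℓ → f (n + j * ℓ) = f n
  | 0, _ => by rw [zero_mul, add_zero]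
  | j + 1, hj => by
    rw [add_mul, one_mul] at hj ⊢
    have hstep := h (n + j * ℓ - p) (by omega)
    rw [show p + (n + j * ℓ - p) = n + j * ℓ by omega] at hstep
    rw [← add_assoc, hstep, apply_add_mul h hn j (by omega)]

theorem half (h : IsFifthPowerAt f p (2 * ℓ)) (hf : ∀ k, f (2 * k + 1) = f k) :
    IsFifthPowerAt f (p / 2) ℓ := by
  intro j hj
  have := h (2 * (p / 2 + j) + 1 - p) (by omega)
  rwa [show p + (2 * (p / 2 + j) + 1 - p) = 2 * (p / 2 + j) + 1 by omega,
    show 2 * (p / 2 + j) + 1 + 2 * ℓ = 2 * (p / 2 + j + ℓ) + 1 by ring, hf, hf] at this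

theorem apply_succ_eq_neg {f : ℕ → ℤ} (h : IsFifthPowerAt f p ℓ)
    (hf : ∀ k, f (4 * k + 2) = -f (4 * k + 1)) (hℓ : Odd ℓ) {n : ℕ}
    (hpn : p ≤ n) (hn : n < p + ℓ) : f (n + 1) = -f n := by
  obtain ⟨j, hj, hmod⟩ := exists_lt_four_add_mul_mod_four_eq_one hℓ n
  have hjℓ : j * ℓ ≤ 3 * ℓ := Nat.mul_le_mul_right ℓ (by omega)
  have key := hf ((n + j * ℓ) / 4)
  rwa [show 4 * ((n + j * ℓ) / 4) + 1 = n + j * ℓ by omega,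
    show 4 * ((n + j * ℓ) / 4) + 2 = n + 1 + j * ℓ by omega,
    h.apply_add_mul hpn j (by omega), h.apply_add_mul (by omega : p ≤ n + 1) j (by omega)] at key

end IsFifthPowerAt

theorem not_isFifthPowerAt_of_odd {f : ℕ → ℤ} (hf : ∀ k, f (4 * k + 2) = -f (4 * k + 1))
    (hf0 : ∀ n, f n ≠ 0) {p ℓ : ℕ} (hℓ : Odd ℓ) : ¬ IsFifthPowerAt f p ℓ := by
  intro h
  have halt : ∀ i ≤ ℓ, f (p + i) = (-1) ^ i * f p := by
    intro i hi
    induction i with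
    | zero => simp
    | succ i ih =>
      rw [← add_assoc, h.apply_succ_eq_neg hf hℓ (by omega) (by omega), ih (by omega), pow_succ]
      ring
  have hperiod := h 0 (by have := hℓ.pos; omega)
  rw [add_zero, halt ℓ le_rfl, hℓ.neg_one_pow, neg_one_mul] at hperiod
  exact hf0 p (by linarith)

theorem not_isFifthPowerAt {f : ℕ → ℤ} (hf2 : ∀ k, f (2 * k + 1) = f k)
    (hf4 : ∀ k, f (4 * k + 2) = -f (4 * k + 1)) (hf0 : ∀ n, f n ≠ 0) {ℓ : ℕ} (hℓ : 0 < ℓ)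
    (p : ℕ) : ¬ IsFifthPowerAt f p ℓ := by
  induction ℓ using Nat.strong_induction_on generalizing p with
  | _ ℓ ih =>
    obtain ⟨m, rfl | rfl⟩ := Nat.even_or_odd' ℓ
    · exact fun h => ih m (by omega) (by omega) (p / 2) (h.half hf2)
    · exact not_isFifthPowerAt_of_odd hf4 hf0 (odd_two_mul_add_one m)

theorem no_fifth_powers :
    ¬ ∃ (p ℓ : ℕ), 1 ≤ ℓ ∧ ∀ j < 4 * ℓ, iSeq (p + j + ℓ) = iSeq (p + j) := by
  rintro ⟨p, ℓ, hℓ, h⟩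
  exact not_isFifthPowerAt iSeq_two_mul_add_one iSeq_four_mul_add_two iSeq_ne_zero hℓ p h
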